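/- Let ζ be an irrational real number. Then λ_{k,1}(ζ) = ∞ for all positive integers k if and only if λ_{1,1}(ζ) = ∞, i.e. if and only if ζ is a Liouville number. -/

import Mathlib

open scoped ENNReal

/-- The system `|x| ≤ X`, `max_{1≤i≤k} |ζ_i·x − y_i| ≤ X^(−η)` has at least `j`
linearly independent integer solutions `(x, y_1, …, y_k) ∈ ℤ^(k+1)`.
Here the solution vector `v i : Fin (k+1) → ℤ` has `x = v i 0` and `y_m = v i m.succ`. -/
def HasSolutions (k : ℕ) (ζ : Fin k → ℝ) (η X : ℝ) (j : ℕ) : Prop :=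
  ∃ v : Fin j → (Fin (k + 1) → ℤ), LinearIndependent ℤ v ∧
    ∀ i : Fin j, |(v i 0 : ℝ)| ≤ X ∧
      ∀ m : Fin k, |ζ m * (v i 0 : ℝ) - (v i m.succ : ℝ)| ≤ X ^ (-η)

/-- `λ_{k,j}(ζ⃗)`: the supremum in `[0,∞]` of all `η ∈ ℝ` such that the system has at
least `j` linearly independent solutions for arbitrarily large real `X`. -/
noncomputable def lambdaVec (k j : ℕ) (ζ : Fin k → ℝ) : ℝ≥0∞ :=
  sSup {e : ℝ≥0∞ | ∃ η : ℝ, e = ENNReal.ofReal η ∧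
    ∀ X₀ : ℝ, ∃ X : ℝ, X₀ ≤ X ∧ HasSolutions k ζ η X j}

/-- `λ̂_{k,j}(ζ⃗)`: the supremum in `[0,∞]` of all `η ∈ ℝ` such that the system has at
least `j` linearly independent solutions for every sufficiently large real `X`. -/
noncomputable def lambdaHatVec (k j : ℕ) (ζ : Fin k → ℝ) : ℝ≥0∞ :=
  sSup {e : ℝ≥0∞ | ∃ η : ℝ, e = ENNReal.ofReal η ∧
    ∃ X₀ : ℝ, ∀ X : ℝ, X₀ ≤ X → HasSolutions k ζ η X j}

/-- `λ_{k,j}(ζ) = λ_{k,j}(ζ, ζ², …, ζ^k)`. -/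
noncomputable def lambdaPow (k j : ℕ) (ζ : ℝ) : ℝ≥0∞ :=
  lambdaVec k j fun i => ζ ^ ((i : ℕ) + 1)

/-- `λ̂_{k,j}(ζ) = λ̂_{k,j}(ζ, ζ², …, ζ^k)`. -/
noncomputable def lambdaHatPow (k j : ℕ) (ζ : ℝ) : ℝ≥0∞ :=
  lambdaHatVec k j fun i => ζ ^ ((i : ℕ) + 1)

/-! `λ_{k,1}(ζ) = ∞` says that for every `η` there are arbitrarily large `X` with a nonzero integer
solution. For `k = 1`, a solution `(x, y)` with `x > 0` is a fraction `y / x` with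
`|ζ - y / x| ≤ X^{-η}`, which is Liouville's condition, and conversely. If `|ζ x - y| ≤ X^{-η'}`,
then `(x^k, x^{k-1} y, …, y^k)` approximates `(ζ, …, ζ^k)` at height `X^k` with error
`O(X^{k-η'})`, so `λ_{1,1}(ζ) = ∞` forces `λ_{k,1}(ζ) = ∞`. -/

open Filter

theorem HasSolutions.of_exponent_le {k j : ℕ} {ζ : Fin k → ℝ} {η η' X : ℝ} (hX : 1 ≤ X)
    (hη : η ≤ η') (h : HasSolutions k ζ η' X j) : HasSolutions k ζ η X j := by
  obtain ⟨v, hv, hsol⟩ := h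
  exact ⟨v, hv, fun i => ⟨(hsol i).1, fun m =>
    ((hsol i).2 m).trans (Real.rpow_le_rpow_of_exponent_le hX (neg_le_neg hη))⟩⟩

theorem frequently_hasSolutions_of_exponent_le {k j : ℕ} {ζ : Fin k → ℝ} {η η' : ℝ}
    (hη : η ≤ η') (h : ∃ᶠ X in atTop, HasSolutions k ζ η' X j) :
    ∃ᶠ X in atTop, HasSolutions k ζ η X j :=
  h.mp <| (eventually_ge_atTop 1).mono fun _ hX => HasSolutions.of_exponent_le hX hη

theorem lambdaVec_eq_top_iff {k j : ℕ} {ζ : Fin k → ℝ} :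
    lambdaVec k j ζ = ⊤ ↔ ∀ η : ℝ, ∃ᶠ X in atTop, HasSolutions k ζ η X j := by
  constructor
  · intro h η
    have hlt : ENNReal.ofReal η < lambdaVec k j ζ := h ▸ ENNReal.ofReal_lt_top
    obtain ⟨_, ⟨η', rfl, hη'⟩, hηη'⟩ := lt_sSup_iff.1 hlt
    exact frequently_hasSolutions_of_exponent_le (ENNReal.ofReal_lt_ofReal_iff'.1 hηη').1.le
      (frequently_atTop.2 hη')
  · intro h
    exact ENNReal.eq_top_of_forall_nnreal_le fun r =>
      le_sSup ⟨r, ENNReal.ofReal_coe_nnreal.symm, frequently_atTop.1 (h r)⟩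

theorem lambdaPow_one (j : ℕ) (ζ : ℝ) : lambdaPow 1 j ζ = lambdaVec 1 j fun _ => ζ := by
  simp [lambdaPow]

theorem hasSolutions_one_iff {k : ℕ} {ζ : Fin k → ℝ} {η X : ℝ} :
    HasSolutions k ζ η X 1 ↔ ∃ w : Fin (k + 1) → ℤ, w ≠ 0 ∧ |(w 0 : ℝ)| ≤ X ∧
      ∀ m : Fin k, |ζ m * w 0 - w m.succ| ≤ X ^ (-η) := by
  constructor
  · rintro ⟨v, hv, hsol⟩
    exact ⟨v 0, linearIndependent_unique_iff.1 hv, hsol 0⟩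
  · rintro ⟨w, hw, hsol⟩
    exact ⟨fun _ => w, linearIndependent_unique_iff.2 hw, fun _ => hsol⟩

/-- An error below `1` forces `x ≠ 0`, and `(x, y) ↦ (-x, -y)` makes `x` positive. -/
theorem HasSolutions.exists_pos_approx {ζ η X : ℝ} (hε : X ^ (-η) < 1)
    (h : HasSolutions 1 (fun _ => ζ) η X 1) :
    ∃ x y : ℤ, 0 < x ∧ (x : ℝ) ≤ X ∧ |ζ * x - y| ≤ X ^ (-η) := by
  obtain ⟨w, hw, hx, hxy⟩ := hasSolutions_one_iff.1 h
  replace hxy : |ζ * w 0 - w 1| ≤ X ^ (-η) := hxy 0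
  have hx0 : w 0 ≠ 0 := by
    intro h0
    have h1 : w 1 = 0 := by
      rw [h0, Int.cast_zero, mul_zero, zero_sub, abs_neg] at hxy
      exact Int.abs_lt_one_iff.1 (by exact_mod_cast hxy.trans_lt hε)
    exact hw (funext fun i => by fin_cases i <;> simp [h0, h1])
  rcases hx0.lt_or_gt with hneg | hpos
  · refine ⟨-w 0, -w 1, neg_pos.2 hneg, ?_, ?_⟩
    · push_cast
      exact (neg_le_abs _).trans hx
    · rw [← abs_neg]
      convert hxy using 2
      push_cast
      ring
  · exact ⟨w 0, w 1, hpos, (le_abs_self _).trans hx, hxy⟩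

theorem Liouville.frequently_hasSolutions {ζ : ℝ} (hζ : Liouville ζ) (η : ℝ) :
    ∃ᶠ X in atTop, HasSolutions 1 (fun _ => ζ) η X 1 := by
  refine tendsto_natCast_atTop_atTop.frequently_map _ ?_
    ((eventually_gt_atTop 0).and_frequently (hζ.frequently_exists_num (⌈η⌉₊ + 1)))
  rintro b ⟨hb, a, -, hlt⟩
  have hb1 : (1 : ℝ) ≤ b := by exact_mod_cast hb
  have hb0 : (0 : ℝ) < b := by positivity
  suffices hba : |ζ * b - a| ≤ (b : ℝ) ^ (-η) from
    hasSolutions_one_iff.2 ⟨![b, a], by simp [hb.ne'], by simp, fun _ => by simpa using hba⟩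
  calc |ζ * b - a| = |ζ - a / b| * b := by
        rw [show ζ * b - a = (ζ - a / b) * b by field_simp, abs_mul, abs_of_pos hb0]
    _ ≤ 1 / (b : ℝ) ^ (⌈η⌉₊ + 1) * b := by gcongr
    _ = (b : ℝ) ^ (-(⌈η⌉₊ : ℝ)) := by
        rw [Real.rpow_neg hb0.le, Real.rpow_natCast, pow_succ]
        field_simp
    _ ≤ (b : ℝ) ^ (-η) := Real.rpow_le_rpow_of_exponent_le hb1 (neg_le_neg (Nat.le_ceil η))

theorem liouville_of_frequently_hasSolutions {ζ : ℝ} (hζ : Irrational ζ)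
    (h : ∀ η, ∃ᶠ X in atTop, HasSolutions 1 (fun _ => ζ) η X 1) : Liouville ζ := by
  intro n
  obtain ⟨X, hsol, hX⟩ := ((h (2 * n + 1)).and_eventually (eventually_ge_atTop 2)).exists
  have hX1 : (1 : ℝ) < X := by linarith
  obtain ⟨x, y, hx, hxX, hxy⟩ := hsol.exists_pos_approx
    (Real.rpow_lt_one_of_one_lt_of_neg hX1 (by linarith [(n.cast_nonneg : (0 : ℝ) ≤ n)]))
  have hx1 : (1 : ℝ) ≤ x := by exact_mod_cast hx
  have hfrac : ((2 * y : ℤ) : ℝ) / ((2 * x : ℤ) : ℝ) = y / x := by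
    push_cast
    field_simp
  -- the denominator `2 x` rather than `x`, because Liouville's condition asks for `1 < b`
  refine ⟨2 * y, 2 * x, by omega, ?_, ?_⟩
  · rw [hfrac]
    exact_mod_cast hζ.ne_rat (y / x)
  · rw [hfrac]
    calc |ζ - y / x| = |ζ * x - y| / x := by
          rw [show ζ - y / x = (ζ * x - y) / x by field_simp, abs_div,
            abs_of_pos (by positivity : (0 : ℝ) < x)]
      _ ≤ |ζ * x - y| := div_le_self (abs_nonneg _) hx1
      _ ≤ X ^ (-(2 * n + 1 : ℝ)) := hxy
      _ < X ^ (-(2 * n : ℝ)) := Real.rpow_lt_rpow_of_exponent_lt hX1 (by linarith)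
      _ = 1 / (X ^ 2) ^ n := by
          rw [Real.rpow_neg (by positivity), ← pow_mul, ← Real.rpow_natCast]
          push_cast
          ring
      _ ≤ 1 / ((2 * x : ℤ) : ℝ) ^ n := by
          push_cast
          gcongr
          nlinarith

theorem liouville_iff_forall_frequently_hasSolutions {ζ : ℝ} (hζ : Irrational ζ) :
    Liouville ζ ↔ ∀ η, ∃ᶠ X in atTop, HasSolutions 1 (fun _ => ζ) η X 1 :=
  ⟨Liouville.frequently_hasSolutions, liouville_of_frequently_hasSolutions hζ⟩

theorem abs_pow_mul_pow_sub_pow_mul_pow_le {ζ x y X : ℝ} (hX : 1 ≤ X) (hx : |x| ≤ X)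
    (hxy : |ζ * x - y| ≤ X) {m k : ℕ} (hmk : m ≤ k) :
    |ζ ^ m * x ^ k - x ^ (k - m) * y ^ m| ≤ k * ((|ζ| + 1) * X) ^ k * |ζ * x - y| := by
  set B := (|ζ| + 1) * X
  have hXB : X ≤ B := le_mul_of_one_le_left (by positivity) (by linarith [abs_nonneg ζ])
  have hζx : |ζ * x| ≤ |ζ| * X := by rw [abs_mul]; gcongr
  have hy : |y| ≤ B := by
    have : |y| - |ζ * x| ≤ |ζ * x - y| := abs_sub_comm y (ζ * x) ▸ abs_sub_abs_le_abs_sub _ _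
    linarith [show B = |ζ| * X + X by ring]
  have hmax : max |ζ * x| |y| ≤ B := max_le (by linarith) hy
  have hsplit : ζ ^ m * x ^ k - x ^ (k - m) * y ^ m = x ^ (k - m) * ((ζ * x) ^ m - y ^ m) := by
    obtain ⟨r, rfl⟩ := Nat.exists_eq_add_of_le hmk
    rw [Nat.add_sub_cancel_left]
    ring
  calc |ζ ^ m * x ^ k - x ^ (k - m) * y ^ m|
      = |x| ^ (k - m) * |(ζ * x) ^ m - y ^ m| := by rw [hsplit, abs_mul, abs_pow]
    _ ≤ B ^ (k - m) * (|ζ * x - y| * m * B ^ (m - 1)) := by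
        gcongr
        · exact hx.trans hXB
        · exact (abs_pow_sub_pow_le _ _ _).trans (by gcongr)
    _ = m * B ^ (k - m + (m - 1)) * |ζ * x - y| := by ring
    _ ≤ k * B ^ k * |ζ * x - y| := by
        gcongr
        · linarith
        · omega

/-- The extra `k + 1` in the exponent absorbs the loss `k ((|ζ| + 1) X) ^ k` of
`abs_pow_mul_pow_sub_pow_mul_pow_le` once `X ≥ k (|ζ| + 1) ^ k`. -/
theorem hasSolutions_pow_of_approx {ζ η X : ℝ} {k : ℕ} {x y : ℤ} (hη : 0 ≤ η) (hX : 1 ≤ X)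
    (hXk : k * (|ζ| + 1) ^ k ≤ X) (hx : 0 < x) (hxX : (x : ℝ) ≤ X)
    (hxy : |ζ * x - y| ≤ X ^ (-(k * η + k + 1))) :
    HasSolutions k (fun i => ζ ^ ((i : ℕ) + 1)) η (X ^ k) 1 := by
  have hX0 : 0 < X := by linarith
  have hε : X ^ (-(k * η + k + 1)) ≤ X :=
    (Real.rpow_le_one_of_one_le_of_nonpos hX (by nlinarith [k.cast_nonneg (α := ℝ)])).trans hX
  refine hasSolutions_one_iff.2 ⟨fun j => x ^ (k - j) * y ^ (j : ℕ), fun h => ?_, ?_, fun m => ?_⟩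
  · simpa using (pow_pos hx k).ne' (by simpa using congrFun h 0)
  · have hx' : (0 : ℝ) < x := by exact_mod_cast hx
    simpa [abs_of_pos hx'] using pow_le_pow_left₀ hx'.le hxX k
  · simp only [Fin.val_zero, Fin.val_succ, Nat.sub_zero, pow_zero, mul_one, Int.cast_mul,
      Int.cast_pow]
    calc |ζ ^ ((m : ℕ) + 1) * x ^ k - x ^ (k - ((m : ℕ) + 1)) * y ^ ((m : ℕ) + 1)|
        ≤ k * ((|ζ| + 1) * X) ^ k * |ζ * x - y| :=
          abs_pow_mul_pow_sub_pow_mul_pow_le hX (by rwa [abs_of_pos (by exact_mod_cast hx)])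
            (hxy.trans hε) m.isLt
      _ ≤ k * ((|ζ| + 1) * X) ^ k * X ^ (-(k * η + k + 1)) := by gcongr
      _ = k * (|ζ| + 1) ^ k / X * (X ^ k) ^ (-η) := by
          rw [← Real.rpow_natCast X k, ← Real.rpow_mul hX0.le,
            show -(k * η + k + 1) = k * -η - k - 1 by ring, Real.rpow_sub hX0,
            Real.rpow_sub hX0, Real.rpow_one, Real.rpow_natCast, mul_pow]
          field_simp
      _ ≤ (X ^ k) ^ (-η) := by
          exact mul_le_of_le_one_left (by positivity) ((div_le_one hX0).2 hXk)

theorem frequently_hasSolutions_pow {ζ : ℝ}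
    (h : ∀ η, ∃ᶠ X in atTop, HasSolutions 1 (fun _ => ζ) η X 1) {k : ℕ} (hk : 0 < k) (η : ℝ) :
    ∃ᶠ X in atTop, HasSolutions k (fun i => ζ ^ ((i : ℕ) + 1)) η X 1 := by
  wlog hη : 0 ≤ η generalizing η
  · exact frequently_hasSolutions_of_exponent_le (le_max_left η 0) (this _ (le_max_right η 0))
  refine (tendsto_pow_atTop hk.ne').frequently_map _ (fun X ⟨hsol, hX, hXk⟩ => ?_)
    ((h (k * η + k + 1)).and_eventually
      ((eventually_gt_atTop 1).and (eventually_ge_atTop (k * (|ζ| + 1) ^ k))))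
  obtain ⟨x, y, hx, hxX, hxy⟩ := hsol.exists_pos_approx
    (Real.rpow_lt_one_of_one_lt_of_neg hX (by nlinarith [k.cast_nonneg (α := ℝ)]))
  exact hasSolutions_pow_of_approx hη hX.le hXk hx hxX hxy

/-- Corollary (Bugeaud): for irrational `ζ`, `λ_{k,1}(ζ) = ∞` for all positive `k`
iff `λ_{1,1}(ζ) = ∞`, i.e. iff `ζ` is a Liouville number. -/
theorem stmt10 (ζ : ℝ) (hζ : Irrational ζ) :
    ((∀ k : ℕ, 0 < k → lambdaPow k 1 ζ = ⊤) ↔ lambdaPow 1 1 ζ = ⊤) ∧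
    (lambdaPow 1 1 ζ = ⊤ ↔ Liouville ζ) := by
  have h1 : lambdaPow 1 1 ζ = ⊤ ↔ ∀ η, ∃ᶠ X in atTop, HasSolutions 1 (fun _ => ζ) η X 1 := by
    rw [lambdaPow_one, lambdaVec_eq_top_iff]
  refine ⟨⟨fun h => h 1 one_pos, fun h k hk => ?_⟩,
    h1.trans (liouville_iff_forall_frequently_hasSolutions hζ).symm⟩
  exact lambdaVec_eq_top_iff.2 (frequently_hasSolutions_pow (h1.1 h) hk)
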